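/- Let |α| < 1, δ ∈ [0, π/2), and let (a_n) be a complex sequence with ∑_{n≥0} |a_n| e^{-δ n} < ∞. Define f(x) = ∑_{n≥0} a_n Re K_{α+in}(x) for x > 0. Then ∫_0^∞ e^{-x} |f(x)| dx ≤ (∑_{n≥0} |a_n| e^{-δ n}) ∫_0^∞ e^{-x} K_α(x cos δ) dx < ∞. -/

import Mathlib

/-!
Shift the contour of `∫_0^∞ e^{-x cosh z} cosh(αz) e^{inz} dz` from the positive real axis to the
line `Im z = δ`. The vertical side at `Re z = R` vanishes as `R → ∞` because `e^{-x cosh z}` decays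
super-exponentially there, and the side on the imaginary axis is real, so it does not contribute to
`Re K_{α+in}(x)`. On the shifted line `Re cosh(u + iδ) = cosh u cos δ`,
`|cosh(α(u + iδ))| ≤ cosh(αu)` and `|e^{in(u+iδ)}| = e^{-nδ}`, whence
`|Re K_{α+in}(x)| ≤ e^{-nδ} K_α(x cos δ)` and `|f(x)| ≤ (∑ |a_n| e^{-nδ}) K_α(x cos δ)`.
Finally, by Tonelli, `∫_0^∞ e^{-x} K_α(x cos δ) dx = ∫_0^∞ cosh(αu) / (1 + cos δ cosh u) du`,
which is finite because `|α| < 1`.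
-/

open MeasureTheory

/-- `Re K_{α+iτ}(x) = ∫_0^∞ e^{-x cosh u} cosh(α u) cos(τ u) du`. -/
noncomputable def ReK (α τ x : ℝ) : ℝ :=
  ∫ u in Set.Ioi (0:ℝ), Real.exp (-(x * Real.cosh u)) * Real.cosh (α * u) * Real.cos (τ * u)

/-- `K_α(y) = ∫_0^∞ e^{-y cosh u} cosh(α u) du`. -/
noncomputable def Kreal (α y : ℝ) : ℝ :=
  ∫ u in Set.Ioi (0:ℝ), Real.exp (-(y * Real.cosh u)) * Real.cosh (α * u)

open Set Filter Topology Asymptotics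
open Complex (I)

lemma cosh_le_exp_abs (x : ℝ) : Real.cosh x ≤ Real.exp |x| := by
  have h₁ := Real.exp_le_exp.2 (le_abs_self x)
  have h₂ := Real.exp_le_exp.2 (neg_le_abs x)
  rw [Real.cosh_eq]
  linarith

lemma exp_neg_mul_cosh_mul_cosh_isBigO (α b : ℝ) {y : ℝ} (hy : 0 < y) :
    (fun u => Real.exp (-(y * Real.cosh u)) * Real.cosh (α * u)) =O[atTop]
      fun u => Real.exp (-b * u) := by
  refine IsBigO.of_bound 1 ?_
  filter_upwards [eventually_ge_atTop (max 0 (4 * (|α| + |b|) / y))] with u hu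
  obtain ⟨hu₀, hu₁⟩ := max_le_iff.1 hu
  rw [div_le_iff₀ hy] at hu₁
  have hcosh : u ^ 2 / 4 ≤ Real.cosh u := by
    have := Real.quadratic_le_exp_of_nonneg hu₀
    have := Real.exp_pos (-u)
    rw [Real.cosh_eq]
    nlinarith
  have hα : Real.cosh (α * u) ≤ Real.exp (|α| * u) := by
    simpa [abs_mul, abs_of_nonneg hu₀] using cosh_le_exp_abs (α * u)
  have hexp : -(y * Real.cosh u) + |α| * u ≤ -b * u := by
    nlinarith [mul_le_mul_of_nonneg_right (le_abs_self b) hu₀,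
      mul_le_mul_of_nonneg_left hcosh hy.le, mul_le_mul_of_nonneg_right hu₁ hu₀]
  rw [one_mul, Real.norm_of_nonneg (by positivity), Real.norm_of_nonneg (by positivity)]
  calc Real.exp (-(y * Real.cosh u)) * Real.cosh (α * u)
      ≤ Real.exp (-(y * Real.cosh u)) * Real.exp (|α| * u) := by gcongr
    _ ≤ Real.exp (-b * u) := by rw [← Real.exp_add]; exact Real.exp_le_exp.2 hexp

lemma integrableOn_exp_neg_mul_cosh_mul_cosh (α : ℝ) {y : ℝ} (hy : 0 < y) :
    IntegrableOn (fun u => Real.exp (-(y * Real.cosh u)) * Real.cosh (α * u)) (Ioi 0) :=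
  integrable_of_isBigO_exp_neg one_pos (by fun_prop) (exp_neg_mul_cosh_mul_cosh_isBigO α 1 hy)

lemma tendsto_exp_neg_mul_cosh_mul_cosh (α : ℝ) {y : ℝ} (hy : 0 < y) :
    Tendsto (fun u => Real.exp (-(y * Real.cosh u)) * Real.cosh (α * u)) atTop (𝓝 0) :=
  (exp_neg_mul_cosh_mul_cosh_isBigO α 1 hy).trans_tendsto <| by
    simpa using Real.tendsto_exp_neg_atTop_nhds_zero

lemma integral_Ioi_add_mul_I_eq {E : Type*} [NormedAddCommGroup E] [NormedSpace ℂ E]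
    [CompleteSpace E] {f : ℂ → E} (hf : Differentiable ℂ f) {δ : ℝ}
    (h₀ : IntegrableOn (fun u : ℝ => f u) (Ioi 0))
    (hδ : IntegrableOn (fun u : ℝ => f (u + δ * I)) (Ioi 0))
    (hvert : Tendsto (fun R : ℝ => ∫ t in (0 : ℝ)..δ, f (R + t * I)) atTop (𝓝 0)) :
    ∫ u in Ioi (0 : ℝ), f (u + δ * I) =
      (∫ u in Ioi (0 : ℝ), f u) - I • ∫ t in (0 : ℝ)..δ, f (t * I) := by
  have hrect (R : ℝ) : ∫ u in (0 : ℝ)..R, f (u + δ * I) =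
      (∫ u in (0 : ℝ)..R, f u) + I • (∫ t in (0 : ℝ)..δ, f (R + t * I)) -
        I • ∫ t in (0 : ℝ)..δ, f (t * I) := by
    have h := Complex.integral_boundary_rect_eq_zero_of_differentiableOn f 0 (R + δ * I)
      hf.differentiableOn
    simp only [Complex.zero_re, Complex.zero_im, Complex.add_re, Complex.add_im,
      Complex.ofReal_re, Complex.ofReal_im, Complex.mul_re, Complex.mul_im, Complex.I_re,
      Complex.I_im, mul_zero, mul_one, sub_zero, add_zero, zero_add, Complex.ofReal_zero,
      zero_mul] at h
    linear_combination (norm := abel) -h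
  have hlim := ((intervalIntegral_tendsto_integral_Ioi 0 h₀ tendsto_id).add
    (hvert.const_smul I)).sub_const (I • ∫ t in (0 : ℝ)..δ, f (t * I))
  rw [smul_zero, add_zero] at hlim
  exact tendsto_nhds_unique (intervalIntegral_tendsto_integral_Ioi 0 hδ tendsto_id)
    (hlim.congr fun R => (hrect R).symm)

/-- `e^{iτz}` rather than `cos(τz)`: both have the same real part on `ℝ`, but only the former
decays in the upper half-plane. -/
noncomputable def besselKIntegrand (α τ x : ℝ) (z : ℂ) : ℂ :=
  Complex.exp (-x * Complex.cosh z) * Complex.cosh (α * z) * Complex.exp (τ * z * I)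

lemma differentiable_besselKIntegrand (α τ x : ℝ) : Differentiable ℂ (besselKIntegrand α τ x) := by
  unfold besselKIntegrand; fun_prop

lemma re_besselKIntegrand_ofReal (α τ x u : ℝ) :
    (besselKIntegrand α τ x u).re =
      Real.exp (-(x * Real.cosh u)) * Real.cosh (α * u) * Real.cos (τ * u) := by
  have h : besselKIntegrand α τ x u =
      ((Real.exp (-(x * Real.cosh u)) * Real.cosh (α * u) : ℝ) : ℂ) *
        Complex.exp ((τ * u : ℝ) * I) := by
    unfold besselKIntegrand; push_cast; ring_nf
  rw [h, Complex.re_ofReal_mul, Complex.exp_ofReal_mul_I_re]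

lemma besselKIntegrand_mul_I (α τ x t : ℝ) :
    besselKIntegrand α τ x (t * I) =
      ((Real.exp (-(x * Real.cos t)) * Real.cos (α * t) * Real.exp (-(τ * t)) : ℝ) : ℂ) := by
  have hα : (α : ℂ) * (t * I) = (α * t : ℝ) * I := by push_cast; ring
  have hτ : (τ : ℂ) * (t * I) * I = (-(τ * t) : ℝ) := by push_cast; ring_nf; simp
  unfold besselKIntegrand
  rw [hα, hτ, Complex.cosh_mul_I, Complex.cosh_mul_I]
  push_cast
  ring_nf

lemma cosh_add_mul_I (u t : ℝ) :
    Complex.cosh (u + t * I) =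
      (Real.cosh u * Real.cos t : ℝ) + (Real.sinh u * Real.sin t : ℝ) * I := by
  rw [Complex.cosh_add, Complex.cosh_mul_I, Complex.sinh_mul_I]
  push_cast; ring

lemma norm_cosh_add_mul_I_le (u t : ℝ) : ‖Complex.cosh (u + t * I)‖ ≤ Real.cosh u := by
  have h₁ := Real.sin_sq_add_cos_sq t
  have h₂ := Real.cosh_sq u
  rw [cosh_add_mul_I, Complex.norm_add_mul_I, Real.sqrt_le_left (Real.cosh_pos u).le]
  nlinarith [sq_nonneg (Real.sinh u)]

lemma norm_besselKIntegrand_le (α τ x u t : ℝ) :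
    ‖besselKIntegrand α τ x (u + t * I)‖ ≤
      Real.exp (-(x * Real.cos t * Real.cosh u)) * Real.cosh (α * u) * Real.exp (-(τ * t)) := by
  have hexp : ‖Complex.exp (-x * Complex.cosh (u + t * I))‖ =
      Real.exp (-(x * Real.cos t * Real.cosh u)) := by
    rw [Complex.norm_exp, cosh_add_mul_I]
    simp only [neg_mul, Complex.neg_re, Complex.mul_re, Complex.add_re, Complex.ofReal_re,
      Complex.ofReal_im, Complex.add_im, Complex.mul_im, Complex.I_re, Complex.I_im]
    ring_nf
  have hcosh : ‖Complex.cosh (α * (u + t * I))‖ ≤ Real.cosh (α * u) := by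
    rw [show (α : ℂ) * (u + t * I) = (α * u : ℝ) + (α * t : ℝ) * I by push_cast; ring]
    exact norm_cosh_add_mul_I_le _ _
  have hphase : ‖Complex.exp (τ * (u + t * I) * I)‖ = Real.exp (-(τ * t)) := by
    rw [Complex.norm_exp]
    simp [Complex.mul_re, Complex.mul_im]
  unfold besselKIntegrand
  rw [norm_mul, norm_mul, hexp, hphase]
  gcongr

section ContourShift

variable {α τ x δ : ℝ}

lemma norm_besselKIntegrand_le_of_mem_Icc (hx : 0 ≤ x) (hτ : 0 ≤ τ) (hδ : δ ≤ Real.pi)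
    {t : ℝ} (ht : t ∈ Icc 0 δ) (u : ℝ) :
    ‖besselKIntegrand α τ x (u + t * I)‖ ≤
      Real.exp (-(x * Real.cos δ * Real.cosh u)) * Real.cosh (α * u) := by
  have hcos : Real.cos δ ≤ Real.cos t := Real.cos_le_cos_of_nonneg_of_le_pi ht.1 hδ ht.2
  have hphase : Real.exp (-(τ * t)) ≤ 1 := Real.exp_le_one_iff.2 (by nlinarith [ht.1])
  refine (norm_besselKIntegrand_le α τ x u t).trans ?_
  calc Real.exp (-(x * Real.cos t * Real.cosh u)) * Real.cosh (α * u) * Real.exp (-(τ * t))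
      ≤ Real.exp (-(x * Real.cos t * Real.cosh u)) * Real.cosh (α * u) :=
        mul_le_of_le_one_right (by positivity) hphase
    _ ≤ Real.exp (-(x * Real.cos δ * Real.cosh u)) * Real.cosh (α * u) := by gcongr

lemma integrableOn_besselKIntegrand (hx : 0 < x) (hτ : 0 ≤ τ) (hδ : δ < Real.pi / 2)
    {t : ℝ} (ht : t ∈ Icc 0 δ) :
    IntegrableOn (fun u : ℝ => besselKIntegrand α τ x (u + t * I)) (Ioi 0) := by
  have hcos : 0 < Real.cos δ :=
    Real.cos_pos_of_mem_Ioo ⟨by linarith [ht.1, ht.2, Real.pi_pos], hδ⟩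
  refine (integrableOn_exp_neg_mul_cosh_mul_cosh α (mul_pos hx hcos)).mono' ?_ ?_
  · exact ((differentiable_besselKIntegrand α τ x).continuous.comp
      (by fun_prop)).aestronglyMeasurable
  · exact Eventually.of_forall <|
      norm_besselKIntegrand_le_of_mem_Icc hx.le hτ (by linarith [Real.pi_pos]) ht

lemma tendsto_integral_besselKIntegrand_vertical (hx : 0 < x) (hτ : 0 ≤ τ) (hδ₀ : 0 ≤ δ)
    (hδ : δ < Real.pi / 2) :
    Tendsto (fun R : ℝ => ∫ t in (0 : ℝ)..δ, besselKIntegrand α τ x (R + t * I)) atTop (𝓝 0) := by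
  have hcos : 0 < Real.cos δ := Real.cos_pos_of_mem_Ioo ⟨by linarith [Real.pi_pos], hδ⟩
  have hlim := (tendsto_exp_neg_mul_cosh_mul_cosh α (mul_pos hx hcos)).mul_const |δ - 0|
  rw [zero_mul] at hlim
  refine squeeze_zero_norm (fun R => intervalIntegral.norm_integral_le_of_norm_le_const
    fun t ht => ?_) hlim
  rw [uIoc_of_le hδ₀] at ht
  exact norm_besselKIntegrand_le_of_mem_Icc hx.le hτ (by linarith [Real.pi_pos])
    (Ioc_subset_Icc_self ht) R

lemma ReK_eq_re_integral_besselKIntegrand (hx : 0 < x) (hτ : 0 ≤ τ) (hδ₀ : 0 ≤ δ)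
    (hδ : δ < Real.pi / 2) :
    ReK α τ x = (∫ u in Ioi (0 : ℝ), besselKIntegrand α τ x (u + δ * I)).re := by
  have h₀ : IntegrableOn (fun u : ℝ => besselKIntegrand α τ x u) (Ioi 0) := by
    simpa using integrableOn_besselKIntegrand hx hτ hδ ⟨le_rfl, hδ₀⟩
  rw [integral_Ioi_add_mul_I_eq (differentiable_besselKIntegrand α τ x) h₀
    (integrableOn_besselKIntegrand hx hτ hδ ⟨hδ₀, le_rfl⟩)
    (tendsto_integral_besselKIntegrand_vertical hx hτ hδ₀ hδ)]
  simp_rw [besselKIntegrand_mul_I, intervalIntegral.integral_ofReal]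
  rw [Complex.sub_re, smul_eq_mul, Complex.I_mul_re, Complex.ofReal_im, neg_zero, sub_zero,
    ← RCLike.re_to_complex, ← integral_re h₀]
  simp only [ReK, RCLike.re_to_complex, re_besselKIntegrand_ofReal]

lemma abs_ReK_le (hx : 0 < x) (hτ : 0 ≤ τ) (hδ₀ : 0 ≤ δ) (hδ : δ < Real.pi / 2) :
    |ReK α τ x| ≤ Real.exp (-(τ * δ)) * Kreal α (x * Real.cos δ) := by
  have hcos : 0 < Real.cos δ := Real.cos_pos_of_mem_Ioo ⟨by linarith [Real.pi_pos], hδ⟩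
  rw [ReK_eq_re_integral_besselKIntegrand hx hτ hδ₀ hδ, Kreal, ← integral_const_mul]
  refine (Complex.abs_re_le_norm _).trans <| (norm_integral_le_integral_norm _).trans <|
    integral_mono (integrableOn_besselKIntegrand hx hτ hδ ⟨hδ₀, le_rfl⟩).norm
      ((integrableOn_exp_neg_mul_cosh_mul_cosh α (mul_pos hx hcos)).const_mul _) fun u => ?_
  calc ‖besselKIntegrand α τ x (u + δ * I)‖
      ≤ Real.exp (-(x * Real.cos δ * Real.cosh u)) * Real.cosh (α * u) * Real.exp (-(τ * δ)) :=
        norm_besselKIntegrand_le α τ x u δ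
    _ = _ := by ring

end ContourShift

section LaplaceTransform

variable {α c : ℝ}

lemma integral_exp_neg_mul_Ioi_zero {b : ℝ} (hb : 0 < b) :
    ∫ x in Ioi (0 : ℝ), Real.exp (-b * x) = b⁻¹ := by
  rw [integral_exp_mul_Ioi (neg_lt_zero.2 hb), mul_zero, Real.exp_zero, neg_div, div_neg, neg_neg,
    one_div]

lemma one_add_mul_cosh_pos (hc : 0 ≤ c) (u : ℝ) : 0 < 1 + c * Real.cosh u := by
  have := Real.cosh_pos u
  positivity

lemma integrableOn_cosh_mul_div_one_add_mul_cosh (hα : |α| < 1) (hc : 0 < c) :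
    IntegrableOn (fun u => Real.cosh (α * u) / (1 + c * Real.cosh u)) (Ioi 0) := by
  have hpos := one_add_mul_cosh_pos hc.le
  refine integrable_of_isBigO_exp_neg (b := 1 - |α|) (by linarith)
    (Continuous.continuousOn (by fun_prop (disch := exact fun u => (hpos u).ne'))) ?_
  refine IsBigO.of_bound (2 / c) ?_
  filter_upwards [eventually_ge_atTop 0] with u hu
  have hnum : Real.cosh (α * u) ≤ Real.exp (|α| * u) := by
    simpa [abs_mul, abs_of_nonneg hu] using cosh_le_exp_abs (α * u)
  have hden : c * Real.exp u / 2 ≤ 1 + c * Real.cosh u := by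
    have := Real.exp_pos (-u)
    rw [Real.cosh_eq]
    nlinarith
  rw [Real.norm_of_nonneg (by have := hpos u; positivity), Real.norm_of_nonneg (by positivity),
    div_le_iff₀ (hpos u)]
  calc Real.cosh (α * u) ≤ Real.exp (|α| * u) := hnum
    _ = 2 / c * Real.exp (-(1 - |α|) * u) * (c * Real.exp u / 2) := by
        rw [mul_assoc, mul_div_assoc', mul_left_comm, ← Real.exp_add]
        field_simp
        ring_nf
    _ ≤ 2 / c * Real.exp (-(1 - |α|) * u) * (1 + c * Real.cosh u) := by gcongr

lemma integrableOn_exp_neg_mul_Kreal (hα : |α| < 1) (hc : 0 < c) :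
    IntegrableOn (fun x => Real.exp (-x) * Kreal α (x * c)) (Ioi 0) := by
  have hpos := one_add_mul_cosh_pos hc.le
  let F : ℝ × ℝ → ℝ := fun p => Real.cosh (α * p.1) * Real.exp (-(1 + c * Real.cosh p.1) * p.2)
  have hF : Integrable F ((volume.restrict (Ioi 0)).prod (volume.restrict (Ioi 0))) := by
    refine (integrable_prod_iff (by fun_prop : Continuous F).aestronglyMeasurable).2
      ⟨Eventually.of_forall fun u =>
        (exp_neg_integrableOn_Ioi 0 (hpos u)).const_mul (Real.cosh (α * u)), ?_⟩
    refine (integrableOn_cosh_mul_div_one_add_mul_cosh hα hc).congr_fun (fun u _ => ?_)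
      measurableSet_Ioi
    simp only [F, norm_mul, Real.norm_of_nonneg (Real.cosh_pos _).le, Real.norm_eq_abs,
      Real.abs_exp, integral_const_mul, integral_exp_neg_mul_Ioi_zero (hpos u), div_eq_mul_inv]
  refine hF.integral_prod_right.congr (Eventually.of_forall fun x => ?_)
  simp only [F, Kreal, ← integral_const_mul]
  congr 1 with u
  rw [← mul_assoc, ← Real.exp_add, mul_comm]
  ring_nf

end LaplaceTransform

lemma measurable_ReK (α τ : ℝ) : Measurable (ReK α τ) :=
  (Continuous.stronglyMeasurable (by fun_prop : Continuous fun p : ℝ × ℝ =>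
    Real.exp (-(p.1 * Real.cosh p.2)) * Real.cosh (α * p.2) * Real.cos (τ * p.2))
    ).integral_prod_right'.measurable

lemma aestronglyMeasurable_of_hasSum {X E : Type*} [MeasurableSpace X] {μ : Measure X}
    [NormedAddCommGroup E] {F : ℕ → X → E} {f : X → E}
    (hF : ∀ n, AEStronglyMeasurable (F n) μ) (hf : ∀ᵐ x ∂μ, HasSum (fun n => F n x) (f x)) :
    AEStronglyMeasurable f μ :=
  aestronglyMeasurable_of_tendsto_ae atTop
    (fun N => Finset.aestronglyMeasurable_fun_sum (Finset.range N) fun n _ => hF n)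
    (hf.mono fun _ hx => hx.tendsto_sum_nat)

section WeightedSeries

variable {ι : Type*} {a : ι → ℂ} {φ w : ι → ℝ} {K : ℝ}

lemma norm_mul_ofReal_le_of_abs_le (hφ : ∀ n, |φ n| ≤ w n * K) (n : ι) :
    ‖a n * φ n‖ ≤ ‖a n‖ * w n * K := by
  rw [norm_mul, Complex.norm_real, Real.norm_eq_abs, mul_assoc]
  exact mul_le_mul_of_nonneg_left (hφ n) (norm_nonneg _)

lemma summable_norm_mul_ofReal (hw : Summable fun n => ‖a n‖ * w n)
    (hφ : ∀ n, |φ n| ≤ w n * K) : Summable fun n => ‖a n * φ n‖ :=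
  (hw.mul_right K).of_nonneg_of_le (fun _ => norm_nonneg _) (norm_mul_ofReal_le_of_abs_le hφ)

lemma norm_tsum_mul_ofReal_le (hw : Summable fun n => ‖a n‖ * w n)
    (hφ : ∀ n, |φ n| ≤ w n * K) : ‖∑' n, a n * φ n‖ ≤ (∑' n, ‖a n‖ * w n) * K :=
  calc ‖∑' n, a n * φ n‖ ≤ ∑' n, ‖a n * φ n‖ :=
        norm_tsum_le_tsum_norm (summable_norm_mul_ofReal hw hφ)
    _ ≤ ∑' n, ‖a n‖ * w n * K := (summable_norm_mul_ofReal hw hφ).tsum_le_tsum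
        (norm_mul_ofReal_le_of_abs_le hφ) (hw.mul_right K)
    _ = (∑' n, ‖a n‖ * w n) * K := tsum_mul_right

end WeightedSeries

/-- for `|α| < 1`, `δ ∈ [0, π/2)` and a complex sequence `(a_n)` with
`∑ |a_n| e^{-δn} < ∞`, the function `f(x) = ∑ a_n Re K_{α+in}(x)` satisfies
`∫_0^∞ e^{-x}|f(x)| dx ≤ (∑ |a_n| e^{-δn}) ∫_0^∞ e^{-x} K_α(x cos δ) dx < ∞`. -/
theorem estimate_discrete_LS (α δ : ℝ) (hα : |α| < 1) (hδ : δ ∈ Set.Ico 0 (Real.pi / 2))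
    (a : ℕ → ℂ) (ha : Summable (fun n : ℕ => ‖a n‖ * Real.exp (-(δ * n))))
    (f : ℝ → ℂ) (hf : ∀ x > (0:ℝ), f x = ∑' n : ℕ, a n * (ReK α n x : ℂ)) :
    IntegrableOn (fun x : ℝ => Real.exp (-x) * ‖f x‖) (Set.Ioi 0) ∧
    IntegrableOn (fun x : ℝ => Real.exp (-x) * Kreal α (x * Real.cos δ)) (Set.Ioi 0) ∧
    (∫ x in Set.Ioi (0:ℝ), Real.exp (-x) * ‖f x‖) ≤
      (∑' n : ℕ, ‖a n‖ * Real.exp (-(δ * n))) *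
        ∫ x in Set.Ioi (0:ℝ), Real.exp (-x) * Kreal α (x * Real.cos δ) := by
  obtain ⟨hδ₀, hδ⟩ := hδ
  have hK := integrableOn_exp_neg_mul_Kreal hα
    (Real.cos_pos_of_mem_Ioo ⟨by linarith [Real.pi_pos], hδ⟩)
  have hReK (x : ℝ) (hx : 0 < x) (n : ℕ) :
      |ReK α n x| ≤ Real.exp (-(δ * n)) * Kreal α (x * Real.cos δ) := by
    simpa only [mul_comm (n : ℝ) δ] using abs_ReK_le hx n.cast_nonneg hδ₀ hδ
  have hf_le (x : ℝ) (hx : x ∈ Ioi 0) : Real.exp (-x) * ‖f x‖ ≤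
      (∑' n : ℕ, ‖a n‖ * Real.exp (-(δ * n))) * (Real.exp (-x) * Kreal α (x * Real.cos δ)) := by
    rw [hf x hx, mul_left_comm]
    exact mul_le_mul_of_nonneg_left (norm_tsum_mul_ofReal_le ha (hReK x hx)) (Real.exp_pos _).le
  have hf_meas : AEStronglyMeasurable f (volume.restrict (Ioi 0)) :=
    aestronglyMeasurable_of_hasSum
      (fun n => ((measurable_ReK α n).complex_ofReal.const_mul (a n)).aestronglyMeasurable)
      ((ae_restrict_iff' measurableSet_Ioi).2 <| Eventually.of_forall fun x hx => by
        rw [hf x hx]; exact (summable_norm_mul_ofReal ha (hReK x hx)).of_norm.hasSum)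
  have hint : IntegrableOn (fun x => Real.exp (-x) * ‖f x‖) (Ioi 0) :=
    (hK.const_mul _).mono' ((by fun_prop : Continuous fun x : ℝ => Real.exp (-x)
      ).aestronglyMeasurable.mul hf_meas.norm) <|
      (ae_restrict_iff' measurableSet_Ioi).2 <| Eventually.of_forall fun x hx => by
        rw [Real.norm_of_nonneg (by positivity)]; exact hf_le x hx
  refine ⟨hint, hK, ?_⟩
  rw [← integral_const_mul]
  exact setIntegral_mono_on hint (hK.const_mul _) measurableSet_Ioi hf_le
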